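/- The matrix X = [[1,1],[1,1]] and Y = [1] give a map L(A) = XAY on ℝ^{2×1} that maps every minimally semipositive 2×1 matrix to a minimally semipositive matrix, although X is not monomial. -/
import Mathlib


def Semipositive {m n : Type*} [Fintype m] [Fintype n] (A : Matrix m n ℝ) : Prop :=
  ∃ x : n → ℝ, (∀ j, 0 ≤ x j) ∧ ∀ i, 0 < A.mulVec x i

/-- `A` is minimally semipositive: semipositive and no column-deleted submatrix
is semipositive. -/
def MinSemipositive {m n : Type*} [Fintype m] [Fintype n] [DecidableEq n]
    (A : Matrix m n ℝ) : Prop :=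
  Semipositive A ∧ ∀ j : n,
    ¬ Semipositive (A.submatrix id (fun k : {k : n // k ≠ j} => (k : n)))

def Monomial {n : ℕ} (M : Matrix (Fin n) (Fin n) ℝ) : Prop :=
  (∀ i j, 0 ≤ M i j) ∧ (∀ i, ∃! j, M i j ≠ 0) ∧ (∀ j, ∃! i, M i j ≠ 0)

theorem stmt19 :
    (∀ A : Matrix (Fin 2) (Fin 1) ℝ, MinSemipositive A →
      MinSemipositive (!![(1:ℝ),1;1,1] * A * !![(1:ℝ)])) ∧
    ¬ Monomial !![(1:ℝ),1;1,1] := by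
  constructor
  · intro A hA
    -- from semipositivity, both entries of A are positive
    obtain ⟨⟨x, hx0, hxpos⟩, -⟩ := hA
    have hx : ∀ i, 0 < A i 0 * x 0 := by
      intro i
      have := hxpos i
      simpa [Matrix.mulVec, dotProduct, Fin.sum_univ_one] using this
    have hxpos0 : 0 < x 0 := by
      rcases lt_or_eq_of_le (hx0 0) with h | h
      · exact h
      · exfalso; have := hx 0; rw [← h] at this; simp at this
    have hApos : ∀ i : Fin 2, 0 < A i 0 := by
      intro i
      nlinarith [hx i, hxpos0]
    have hB : ∀ i : Fin 2, (!![(1:ℝ),1;1,1] * A * !![(1:ℝ)]) i 0 = A 0 0 + A 1 0 := by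
      intro i
      fin_cases i <;>
        simp [Matrix.mul_apply, Matrix.vecMul, dotProduct, Fin.sum_univ_succ, Fin.sum_univ_one]
    constructor
    · refine ⟨fun _ => 1, fun _ => zero_le_one, fun i => ?_⟩
      have : 0 < A 0 0 + A 1 0 := add_pos (hApos 0) (hApos 1)
      simp only [Matrix.mulVec, dotProduct, Fin.sum_univ_one, mul_one, hB i]
      exact this
    · intro j ⟨y, hy0, hypos⟩
      haveI : IsEmpty {k : Fin 1 // k ≠ j} := ⟨fun k => k.2 (Subsingleton.elim _ _)⟩
      have := hypos 0
      simp [Matrix.mulVec, dotProduct] at this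
  · rintro ⟨-, hrow, -⟩
    obtain ⟨j, -, hj⟩ := hrow 0
    have h0 : (0 : Fin 2) = j := hj 0 (by norm_num)
    have h1 : (1 : Fin 2) = j := hj 1 (by norm_num)
    exact absurd (h0.trans h1.symm) (by norm_num)
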